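/- Assume n is even and let I ⊆ {1,…,n} with |I| = k odd. Set Γ* := i^{n/2}·Γ_1Γ_2⋯Γ_n, so (Γ*)² = 1. For α, β ∈ ℂ and φ ∈ ℂ set c := α·(cos φ·1 + sin φ·Γ*)·Γ_I and d := β·(cos φ·1 − sin φ·Γ*)·Γ_I. Then for every μ ∈ {1,…,n}: if μ ∈ I then q_{c,d}(Γ_μ) = σ_I·(α − β)²·cos(2φ)·Γ_μ, and if μ ∉ I then q_{c,d}(Γ_μ) = σ_I·(α + β)²·cos(2φ)·Γ_μ. (Eigenvalue formula for pseudo-monomial quadratic Clifford pairs of odd type.) -/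
import Mathlib


noncomputable section

/-- The quadratic form `Q(v) = -∑ v μ ^ 2` on `ℂⁿ`. -/
def Qf (n : ℕ) : QuadraticForm ℂ (Fin n → ℂ) :=
  QuadraticMap.weightedSumSquares ℂ (fun _ : Fin n => (-1 : ℂ))

/-- The Clifford algebra of `Qf n`. -/
abbrev Cl (n : ℕ) := CliffordAlgebra (Qf n)

/-- The canonical embedding `ℂⁿ → Cℓ`. -/
def emb (n : ℕ) : (Fin n → ℂ) →ₗ[ℂ] Cl n := CliffordAlgebra.ι (Qf n)

/-- `Γ_μ = ι(e_μ)`. -/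
def Γg (n : ℕ) (μ : Fin n) : Cl n := emb n (Pi.single μ 1)

/-- `Γ_I = Γ_{i₁} ⋯ Γ_{i_k}` with `i₁ < ⋯ < i_k` the elements of `I`. -/
def ΓI (n : ℕ) (I : Finset (Fin n)) : Cl n :=
  ((I.sort (· ≤ ·)).map (Γg n)).prod

/-- `q_{a,b}(x) = a²x + xb² − 2axb`. -/
def qp {n : ℕ} (a b x : Cl n) : Cl n := a ^ 2 * x + x * b ^ 2 - 2 * a * x * b

/-- `s_{a,b}(x) = ax − xb`. -/
def sp {n : ℕ} (a b x : Cl n) : Cl n := a * x - x * b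

/-- `σ_k = (−1)^{k(k+1)/2}`. -/
def σs (k : ℕ) : ℂ := (-1 : ℂ) ^ (k * (k + 1) / 2)

/-! ### Auxiliary lemmas -/

lemma Γg_sq (n : ℕ) (μ : Fin n) : Γg n μ * Γg n μ = -1 := by
  rw [Γg, emb, CliffordAlgebra.ι_sq_scalar]
  have : Qf n (Pi.single μ 1) = -1 := by
    simp [Qf, QuadraticMap.weightedSumSquares_apply, Pi.single_apply]
  rw [this]; simp

lemma Γg_anticomm (n : ℕ) {μ ν : Fin n} (h : μ ≠ ν) :
    Γg n μ * Γg n ν = -(Γg n ν * Γg n μ) := by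
  rw [Γg, Γg, emb]
  apply CliffordAlgebra.ι_mul_ι_comm_of_isOrtho
  rw [QuadraticMap.isOrtho_def]
  simp only [Qf, QuadraticMap.weightedSumSquares_apply]
  rw [← Finset.sum_add_distrib]
  congr 1; funext i
  by_cases hμ : i = μ <;> by_cases hν : i = ν <;> simp_all [Pi.single_apply]

/-- product of gammas along a list -/
def GLs (n : ℕ) (L : List (Fin n)) : Cl n := (L.map (Γg n)).prod

lemma GLs_nil (n : ℕ) : GLs n [] = 1 := rfl
lemma GLs_cons (n : ℕ) (a : Fin n) (L : List (Fin n)) :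
    GLs n (a :: L) = Γg n a * GLs n L := by simp [GLs]

lemma ΓI_eq (n : ℕ) (I : Finset (Fin n)) : ΓI n I = GLs n (I.sort (· ≤ ·)) := rfl

lemma neg_mul_smul_helper {n : ℕ} (s : ℂ) (x y z : Cl n) :
    -(x * s • (y * z)) = (s * -1) • (x * y * z) := by
  rw [mul_smul_comm, mul_assoc, ← neg_smul]
  congr 1; ring

/-- moving an element `X` anticommuting with every `Γ_ν`, `ν ∈ L`, through `GLs L`. -/
lemma X_swap (n : ℕ) (X : Cl n) (L : List (Fin n))
    (h : ∀ ν ∈ L, X * Γg n ν = -(Γg n ν * X)) :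
    X * GLs n L = ((-1 : ℂ) ^ L.length) • (GLs n L * X) := by
  induction L with
  | nil => simp [GLs_nil]
  | cons a L ih =>
    have ha := h a (by simp)
    have ih' := ih (fun ν hν => h ν (by simp [hν]))
    rw [GLs_cons, ← mul_assoc, ha, neg_mul, mul_assoc, ih',
      List.length_cons, pow_succ, neg_mul_smul_helper]

/-- moving `Γ_μ` through `GLs L` for nodup `L`. -/
lemma Γg_swap (n : ℕ) (μ : Fin n) (L : List (Fin n)) (hL : L.Nodup) :
    Γg n μ * GLs n L =
      ((-1 : ℂ) ^ (if μ ∈ L then L.length - 1 else L.length)) • (GLs n L * Γg n μ) := by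
  induction L with
  | nil => simp [GLs_nil]
  | cons a L ih =>
    obtain ⟨haL, hnd⟩ := List.nodup_cons.mp hL
    have ih' := ih hnd
    by_cases hstep : μ = a
    · subst hstep
      have hmem : μ ∉ L := haL
      rw [if_neg hmem] at ih'
      rw [if_pos (by simp), List.length_cons, Nat.add_sub_cancel, GLs_cons, ← mul_assoc]
      conv_rhs => rw [mul_assoc, ← mul_smul_comm, ← ih', ← mul_assoc]
    · have key := Γg_anticomm n hstep
      have hmemiff : (μ ∈ a :: L) ↔ (μ ∈ L) := by simp [List.mem_cons, hstep]
      rw [GLs_cons, ← mul_assoc, key, neg_mul, mul_assoc, ih']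
      by_cases hm : μ ∈ L
      · rw [if_pos hm]
        rw [if_pos (hmemiff.mpr hm), List.length_cons]
        have hlen : 1 ≤ L.length := List.length_pos_iff.mpr (by rintro rfl; simp at hm)
        rw [show L.length + 1 - 1 = (L.length - 1) + 1 by omega, pow_succ,
          neg_mul_smul_helper]
      · rw [if_neg hm]
        rw [if_neg (fun hh => hm (hmemiff.mp hh)), List.length_cons, pow_succ,
          neg_mul_smul_helper]

lemma σs_succ (k : ℕ) : σs (k + 1) = (-1 : ℂ) ^ (k + 1) * σs k := by
  rw [σs, σs, ← pow_add]
  congr 1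
  have h1 : (k+1)*(k+1+1) = k*(k+1) + 2*(k+1) := by ring
  have h2 : k*(k+1) % 2 = 0 := Nat.even_iff.mp (Nat.even_mul_succ_self k)
  omega

/-- reversed swap when not a member. -/
lemma Γg_swap' (n : ℕ) (μ : Fin n) (L : List (Fin n)) (hL : L.Nodup) (hm : μ ∉ L) :
    GLs n L * Γg n μ = ((-1 : ℂ) ^ L.length) • (Γg n μ * GLs n L) := by
  have hsw := Γg_swap n μ L hL
  rw [if_neg hm] at hsw
  rw [hsw, smul_smul, ← pow_add, Even.neg_one_pow ⟨L.length, rfl⟩, one_smul]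

/-- square of the product is `σs`. -/
lemma GLs_sq (n : ℕ) (L : List (Fin n)) (hL : L.Nodup) :
    GLs n L * GLs n L = σs L.length • 1 := by
  induction L with
  | nil => simp [GLs_nil, σs]
  | cons a L ih =>
    obtain ⟨haL, hnd⟩ := List.nodup_cons.mp hL
    have h2 := Γg_swap' n a L hnd haL
    rw [GLs_cons, mul_assoc, ← mul_assoc (GLs n L), h2]
    rw [smul_mul_assoc, mul_smul_comm, mul_assoc, ih hnd, ← mul_assoc, Γg_sq]
    rw [List.length_cons, σs_succ, pow_succ]
    rw [mul_smul_comm, smul_smul]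
    norm_num

lemma key_lemma (n : ℕ) (S G m : Cl n) (σ ε α β φ : ℂ)
    (hS : S * S = 1) (hSm : S * m = -(m * S)) (hGS : G * S = -(S * G))
    (hGG : G * G = σ • 1) (hGm : G * m = ε • (m * G)) :
    qp (α • ((Complex.cos φ • (1:Cl n) + Complex.sin φ • S) * G))
       (β • ((Complex.cos φ • (1:Cl n) - Complex.sin φ • S) * G)) m
      = (σ * (α^2 + β^2 - 2*ε*α*β) * Complex.cos (2*φ)) • m := by
  have hS' : ∀ x : Cl n, S * (S * x) = x := fun x => by
    rw [← mul_assoc, hS, one_mul]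
  have hSm' : ∀ x : Cl n, S * (m * x) = -(m * (S * x)) := fun x => by
    rw [← mul_assoc, hSm, neg_mul, mul_assoc]
  have hGS' : ∀ x : Cl n, G * (S * x) = -(S * (G * x)) := fun x => by
    rw [← mul_assoc, hGS, neg_mul, mul_assoc]
  have hGG' : ∀ x : Cl n, G * (G * x) = σ • x := fun x => by
    rw [← mul_assoc, hGG, smul_mul_assoc, one_mul]
  have hGm' : ∀ x : Cl n, G * (m * x) = ε • (m * (G * x)) := fun x => by
    rw [← mul_assoc, hGm, smul_mul_assoc, mul_assoc]
  rw [Complex.cos_two_mul']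
  simp only [qp, pow_two, two_mul, mul_add, add_mul, mul_sub, sub_mul,
    smul_mul_assoc, mul_smul_comm, smul_smul, one_mul, mul_one, mul_assoc,
    mul_neg, neg_mul, smul_neg, neg_smul, neg_neg,
    hS, hS', hSm, hSm', hGS, hGS', hGG, hGG', hGm, hGm']
  module

lemma Γstar_scalar (n : ℕ) (heven : Even n) :
    Complex.I ^ (n/2) * Complex.I ^ (n/2) * σs n = 1 := by
  obtain ⟨m, rfl⟩ := heven
  have hdiv : (m + m) / 2 = m := by omega
  have hexp : (m+m)*((m+m)+1)/2 = m*(m+m+1) := by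
    have h1 : (m+m)*((m+m)+1) = 2*(m*(m+m+1)) := by ring
    omega
  rw [hdiv, σs, hexp, ← mul_pow, Complex.I_mul_I, ← pow_add]
  exact Even.neg_one_pow ⟨m*(m+1), by ring⟩

/-- eigenvalue formula for pseudo-monomial quadratic Clifford pairs of
odd type. -/
theorem stmt_16 (n : ℕ) (hn : 1 ≤ n) (heven : Even n)
    (I : Finset (Fin n)) (k : ℕ) (hk : I.card = k) (hkodd : Odd k)
    (Γstar : Cl n) (hΓstar : Γstar = (Complex.I) ^ (n / 2) • ΓI n Finset.univ)
    (α β φ : ℂ) (c d : Cl n)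
    (hc : c = α • ((Complex.cos φ • (1 : Cl n) + Complex.sin φ • Γstar) * ΓI n I))
    (hd : d = β • ((Complex.cos φ • (1 : Cl n) - Complex.sin φ • Γstar) * ΓI n I))
    (μ : Fin n) :
    (μ ∈ I → qp c d (Γg n μ) = (σs k * (α - β) ^ 2 * Complex.cos (2 * φ)) • Γg n μ) ∧
    (μ ∉ I → qp c d (Γg n μ) = (σs k * (α + β) ^ 2 * Complex.cos (2 * φ)) • Γg n μ) := by
  subst hc hd hΓstar
  set Lu := (Finset.univ : Finset (Fin n)).sort (· ≤ ·) with hLu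
  set LI := I.sort (· ≤ ·) with hLI
  have hLund : Lu.Nodup := Finset.sort_nodup _ _
  have hLInd : LI.Nodup := Finset.sort_nodup _ _
  have hLulen : Lu.length = n := by
    rw [hLu, Finset.length_sort, Finset.card_univ, Fintype.card_fin]
  have hLIlen : LI.length = k := by rw [hLI, Finset.length_sort, hk]
  have hmemu : ∀ ν : Fin n, ν ∈ Lu := fun ν => (Finset.mem_sort _).mpr (Finset.mem_univ ν)
  have hmemI : ∀ ν : Fin n, ν ∈ LI ↔ ν ∈ I := fun ν => Finset.mem_sort _
  -- Γ* facts
  set cst : ℂ := Complex.I ^ (n / 2) with hcst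
  have hGu := ΓI_eq n Finset.univ
  have hGI := ΓI_eq n I
  -- S * Γ_ν = -(Γ_ν * S) for all ν
  have hSg : ∀ ν : Fin n, (cst • ΓI n Finset.univ) * Γg n ν
      = -(Γg n ν * (cst • ΓI n Finset.univ)) := by
    intro ν
    have hsw := Γg_swap n ν Lu hLund
    rw [if_pos (hmemu ν), hLulen] at hsw
    have hodd : Odd (n - 1) := by
      obtain ⟨m, hm⟩ := heven
      exact ⟨m - 1, by omega⟩
    rw [hodd.neg_one_pow, neg_one_smul] at hsw
    -- hsw : Γg ν * GLs Lu = -(GLs Lu * Γg ν)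
    rw [hGu, smul_mul_assoc, mul_smul_comm, ← smul_neg, hsw, neg_neg]
  -- hS : S * S = 1
  have hS : (cst • ΓI n Finset.univ) * (cst • ΓI n Finset.univ) = 1 := by
    rw [hGu, smul_mul_assoc, mul_smul_comm, smul_smul,
      GLs_sq n Lu hLund, hLulen, smul_smul, Γstar_scalar n heven, one_smul]
  -- hSm
  have hSm : (cst • ΓI n Finset.univ) * Γg n μ = -(Γg n μ * (cst • ΓI n Finset.univ)) :=
    hSg μ
  -- hGS : G * S = -(S * G)
  have hGS : ΓI n I * (cst • ΓI n Finset.univ)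
      = -((cst • ΓI n Finset.univ) * ΓI n I) := by
    have hxs := X_swap n (cst • ΓI n Finset.univ) LI (fun ν _ => hSg ν)
    rw [hLIlen, hkodd.neg_one_pow, neg_one_smul] at hxs
    have h' : GLs n LI * (cst • ΓI n Finset.univ)
        = -((cst • ΓI n Finset.univ) * GLs n LI) := by rw [hxs, neg_neg]
    exact h'
  -- hGG
  have hGG : ΓI n I * ΓI n I = σs k • 1 := by
    rw [hGI, GLs_sq n LI hLInd, hLIlen]
  constructor
  · intro hμ
    have hsw := Γg_swap n μ LI hLInd
    rw [if_pos ((hmemI μ).mpr hμ), hLIlen] at hsw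
    have : Even (k - 1) := by obtain ⟨j, hj⟩ := hkodd; exact ⟨j, by omega⟩
    rw [this.neg_one_pow, one_smul] at hsw
    have hGm : ΓI n I * Γg n μ = (1:ℂ) • (Γg n μ * ΓI n I) := by
      rw [one_smul, hGI, ← hsw]
    have := key_lemma n (cst • ΓI n Finset.univ) (ΓI n I) (Γg n μ) (σs k) 1 α β φ
      hS hSm hGS hGG hGm
    rw [this]
    congr 1; ring
  · intro hμ
    have hsw := Γg_swap n μ LI hLInd
    rw [if_neg (fun hh => hμ ((hmemI μ).mp hh)), hLIlen, hkodd.neg_one_pow,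
      neg_one_smul] at hsw
    have hGm : ΓI n I * Γg n μ = (-1:ℂ) • (Γg n μ * ΓI n I) := by
      rw [neg_one_smul, hGI, ← neg_neg (GLs n LI * Γg n μ), ← hsw]
    have := key_lemma n (cst • ΓI n Finset.univ) (ΓI n I) (Γg n μ) (σs k) (-1) α β φ
      hS hSm hGS hGG hGm
    rw [this]
    congr 1; ring
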